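/- arXiv:2309.11397 — 4 statements merged into one kernel-verified Lean document; each statement's English description precedes it below -/
import Mathlib

section
/- Exactly eight elements of the 42-element set R of ray generators lie in the subgroup N₄ᵦ := {(δ,ρ̄,γ̄,β̄) ∈ ℤ^4 : δ+ρ̄ = 0 and γ̄+β̄ = 0}, namely: ±(1,−1,0,0), which lie in the orbit O_B (type B); ±(1,−1,1,−1) and ±(1,−1,−1,1), which lie in the orbit O_C (type C); and ±(0,0,1,−1), which lie in the orbit O_D (type D). Hence the fan F₄ᵦ = F₆ ∩ N₄ᵦ has exactly 8 rays: two of type B, four of type C and two of type D. -/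
/- The linear action of `Γ₆` on `ℤ^4`, with coordinates `(δ,ρ̄,γ̄,β̄)`. -/

/-- `c·(δ,ρ̄,γ̄,β̄) = (δ,β̄,ρ̄,γ̄)`: cyclic permutation of the last three coordinates. -/
def cP : Equiv.Perm (Fin 4 → ℤ) where
  toFun v := ![v 0, v 3, v 1, v 2]
  invFun v := ![v 0, v 2, v 3, v 1]
  left_inv v := by funext i; fin_cases i <;> rfl
  right_inv v := by funext i; fin_cases i <;> rfl

/-- `s_r` negates `ρ̄`, fixing the other coordinates. -/
def srP : Equiv.Perm (Fin 4 → ℤ) where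
  toFun v := ![v 0, -v 1, v 2, v 3]
  invFun v := ![v 0, -v 1, v 2, v 3]
  left_inv v := by funext i; fin_cases i <;> simp
  right_inv v := by funext i; fin_cases i <;> simp

/-- `s_g` negates `γ̄`, fixing the other coordinates. -/
def sgP : Equiv.Perm (Fin 4 → ℤ) where
  toFun v := ![v 0, v 1, -v 2, v 3]
  invFun v := ![v 0, v 1, -v 2, v 3]
  left_inv v := by funext i; fin_cases i <;> simp
  right_inv v := by funext i; fin_cases i <;> simp

/-- `s_b` negates `β̄`, fixing the other coordinates. -/
def sbP : Equiv.Perm (Fin 4 → ℤ) where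
  toFun v := ![v 0, v 1, v 2, -v 3]
  invFun v := ![v 0, v 1, v 2, -v 3]
  left_inv v := by funext i; fin_cases i <;> simp
  right_inv v := by funext i; fin_cases i <;> simp

/-- `Cr` negates all four coordinates. -/
def crP : Equiv.Perm (Fin 4 → ℤ) := Equiv.neg (Fin 4 → ℤ)

/-- The group `Γ₆` acting linearly on `ℤ^4`, generated by `c, s_r, s_g, s_b, Cr`. -/
def Γ6lin : Subgroup (Equiv.Perm (Fin 4 → ℤ)) :=
  Subgroup.closure {cP, srP, sgP, sbP, crP}

/-- The orbit `O_A` of `A = (2,0,0,0)`. -/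
def OA : Set (Fin 4 → ℤ) := MulAction.orbit Γ6lin ![2, 0, 0, 0]
/-- The orbit `O_B` of `B = (1,1,0,0)`. -/
def OB : Set (Fin 4 → ℤ) := MulAction.orbit Γ6lin ![1, 1, 0, 0]
/-- The orbit `O_C` of `C = (1,1,1,1)`. -/
def OC : Set (Fin 4 → ℤ) := MulAction.orbit Γ6lin ![1, 1, 1, 1]
/-- The orbit `O_D` of `D = (0,1,0,1)`. -/
def OD : Set (Fin 4 → ℤ) := MulAction.orbit Γ6lin ![0, 1, 0, 1]

/-- The set `R` of integral generators of the rays of the fan `F₆`. -/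
def RaySet : Set (Fin 4 → ℤ) := OA ∪ OB ∪ OC ∪ OD

/-- `N₄ᵦ := {(δ,ρ̄,γ̄,β̄) ∈ ℤ^4 : δ+ρ̄ = 0 and γ̄+β̄ = 0}`, the cocharacter
lattice of the subtorus `T₄ᵦ ⊂ T₆` defined by `r₁g₁b₁ = r₁g₂b₂ = 1`. -/
def N4b : Set (Fin 4 → ℤ) := {v | v 0 + v 1 = 0 ∧ v 2 + v 3 = 0}

/- ### Auxiliary lemmas -/

lemma cP_mem : cP ∈ Γ6lin := Subgroup.subset_closure (by simp)
lemma srP_mem : srP ∈ Γ6lin := Subgroup.subset_closure (by simp)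
lemma sgP_mem : sgP ∈ Γ6lin := Subgroup.subset_closure (by simp)
lemma sbP_mem : sbP ∈ Γ6lin := Subgroup.subset_closure (by simp)
lemma crP_mem : crP ∈ Γ6lin := Subgroup.subset_closure (by simp)

lemma mem_orbit_of {g : Equiv.Perm (Fin 4 → ℤ)} (hg : g ∈ Γ6lin)
    {v x : Fin 4 → ℤ} (h : g v = x) : x ∈ MulAction.orbit Γ6lin v :=
  ⟨⟨g, hg⟩, h⟩

lemma orbit_subset (S : Finset (Fin 4 → ℤ))
    (h1 : ∀ x ∈ S, cP x ∈ S) (h1' : ∀ x ∈ S, cP.symm x ∈ S)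
    (h2 : ∀ x ∈ S, srP x ∈ S) (h3 : ∀ x ∈ S, sgP x ∈ S)
    (h4 : ∀ x ∈ S, sbP x ∈ S) (h5 : ∀ x ∈ S, (-x) ∈ S)
    {v : Fin 4 → ℤ} (hv : v ∈ S) :
    MulAction.orbit Γ6lin v ⊆ (S : Set (Fin 4 → ℤ)) := by
  rintro x ⟨⟨g, hg⟩, rfl⟩
  have key : ∀ g ∈ Γ6lin, (∀ x ∈ S, g x ∈ S) ∧ (∀ x ∈ S, g⁻¹ x ∈ S) := by
    intro g hg
    induction hg using Subgroup.closure_induction with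
    | mem y hy =>
      simp only [Set.mem_insert_iff, Set.mem_singleton_iff] at hy
      rcases hy with rfl | rfl | rfl | rfl | rfl
      · exact ⟨h1, h1'⟩
      · exact ⟨h2, h2⟩
      · exact ⟨h3, h3⟩
      · exact ⟨h4, h4⟩
      · exact ⟨h5, h5⟩
    | one => exact ⟨fun x hx => hx, fun x hx => hx⟩
    | mul a b ha hb pa pb =>
      refine ⟨fun x hx => pa.1 _ (pb.1 x hx), fun x hx => ?_⟩
      rw [mul_inv_rev]
      exact pb.2 _ (pa.2 x hx)
    | inv a ha pa =>
      refine ⟨pa.2, fun x hx => ?_⟩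
      rw [inv_inv]
      exact pa.1 x hx
  exact (key g hg).1 v hv

/-- Explicit list of the orbit `O_A`. -/
def SAf : Finset (Fin 4 → ℤ) := {![2,0,0,0], ![-2,0,0,0]}
/-- Explicit list of the orbit `O_B`. -/
def SBf : Finset (Fin 4 → ℤ) :=
  {![1,1,0,0], ![1,-1,0,0], ![-1,1,0,0], ![-1,-1,0,0],
   ![1,0,1,0], ![1,0,-1,0], ![-1,0,1,0], ![-1,0,-1,0],
   ![1,0,0,1], ![1,0,0,-1], ![-1,0,0,1], ![-1,0,0,-1]}
/-- Explicit list of the orbit `O_C`. -/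
def SCf : Finset (Fin 4 → ℤ) :=
  {![1,1,1,1], ![1,1,1,-1], ![1,1,-1,1], ![1,1,-1,-1],
   ![1,-1,1,1], ![1,-1,1,-1], ![1,-1,-1,1], ![1,-1,-1,-1],
   ![-1,1,1,1], ![-1,1,1,-1], ![-1,1,-1,1], ![-1,1,-1,-1],
   ![-1,-1,1,1], ![-1,-1,1,-1], ![-1,-1,-1,1], ![-1,-1,-1,-1]}
/-- Explicit list of the orbit `O_D`. -/
def SDf : Finset (Fin 4 → ℤ) :=
  {![0,1,0,1], ![0,1,0,-1], ![0,-1,0,1], ![0,-1,0,-1],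
   ![0,1,1,0], ![0,1,-1,0], ![0,-1,1,0], ![0,-1,-1,0],
   ![0,0,1,1], ![0,0,1,-1], ![0,0,-1,1], ![0,0,-1,-1]}

lemma OA_sub : OA ⊆ (SAf : Set (Fin 4 → ℤ)) :=
  orbit_subset _ (by decide) (by decide) (by decide) (by decide) (by decide)
    (by decide) (by decide)
lemma OB_sub : OB ⊆ (SBf : Set (Fin 4 → ℤ)) :=
  orbit_subset _ (by decide) (by decide) (by decide) (by decide) (by decide)
    (by decide) (by decide)
lemma OC_sub : OC ⊆ (SCf : Set (Fin 4 → ℤ)) :=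
  orbit_subset _ (by decide) (by decide) (by decide) (by decide) (by decide)
    (by decide) (by decide)
lemma OD_sub : OD ⊆ (SDf : Set (Fin 4 → ℤ)) :=
  orbit_subset _ (by decide) (by decide) (by decide) (by decide) (by decide)
    (by decide) (by decide)

lemma hB1 : ![(1 : ℤ), -1, 0, 0] ∈ OB := mem_orbit_of srP_mem (by decide)
lemma hB2 : ![(-1 : ℤ), 1, 0, 0] ∈ OB :=
  mem_orbit_of (mul_mem crP_mem srP_mem) (by decide)
lemma hC1 : ![(1 : ℤ), -1, 1, -1] ∈ OC :=
  mem_orbit_of (mul_mem srP_mem sbP_mem) (by decide)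
lemma hC2 : ![(-1 : ℤ), 1, -1, 1] ∈ OC :=
  mem_orbit_of (mul_mem crP_mem (mul_mem srP_mem sbP_mem)) (by decide)
lemma hC3 : ![(1 : ℤ), -1, -1, 1] ∈ OC :=
  mem_orbit_of (mul_mem srP_mem sgP_mem) (by decide)
lemma hC4 : ![(-1 : ℤ), 1, 1, -1] ∈ OC :=
  mem_orbit_of (mul_mem crP_mem (mul_mem srP_mem sgP_mem)) (by decide)
lemma hD1 : ![(0 : ℤ), 0, 1, -1] ∈ OD :=
  mem_orbit_of (mul_mem sbP_mem (mul_mem cP_mem cP_mem)) (by decide)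
lemma hD2 : ![(0 : ℤ), 0, -1, 1] ∈ OD :=
  mem_orbit_of (mul_mem crP_mem (mul_mem sbP_mem (mul_mem cP_mem cP_mem))) (by decide)

/-- The eight ray generators lying in `N₄ᵦ`. -/
def T8f : Finset (Fin 4 → ℤ) :=
  {![1,-1,0,0], ![-1,1,0,0], ![1,-1,1,-1], ![-1,1,-1,1],
   ![1,-1,-1,1], ![-1,1,1,-1], ![0,0,1,-1], ![0,0,-1,1]}

set_option maxRecDepth 100000 in
lemma key_filter : ∀ x ∈ SAf ∪ SBf ∪ SCf ∪ SDf,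
    x 0 + x 1 = 0 → x 2 + x 3 = 0 → x ∈ T8f := by decide

lemma main_eq : RaySet ∩ N4b = (T8f : Set (Fin 4 → ℤ)) := by
  apply Set.Subset.antisymm
  · rintro x ⟨hR, hN1, hN2⟩
    have hx : x ∈ SAf ∪ SBf ∪ SCf ∪ SDf := by
      rcases hR with ((hA | hB) | hC) | hD
      · exact Finset.mem_union_left _ (Finset.mem_union_left _
          (Finset.mem_union_left _ (OA_sub hA)))
      · exact Finset.mem_union_left _ (Finset.mem_union_left _
          (Finset.mem_union_right _ (OB_sub hB)))
      · exact Finset.mem_union_left _ (Finset.mem_union_right _ (OC_sub hC))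
      · exact Finset.mem_union_right _ (OD_sub hD)
    exact key_filter x hx hN1 hN2
  · intro x hx
    simp only [T8f, Finset.coe_insert, Finset.coe_singleton, Set.mem_insert_iff,
      Set.mem_singleton_iff] at hx
    rcases hx with rfl | rfl | rfl | rfl | rfl | rfl | rfl | rfl
    · exact ⟨Or.inl (Or.inl (Or.inr hB1)), by decide, by decide⟩
    · exact ⟨Or.inl (Or.inl (Or.inr hB2)), by decide, by decide⟩
    · exact ⟨Or.inl (Or.inr hC1), by decide, by decide⟩
    · exact ⟨Or.inl (Or.inr hC2), by decide, by decide⟩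
    · exact ⟨Or.inl (Or.inr hC3), by decide, by decide⟩
    · exact ⟨Or.inl (Or.inr hC4), by decide, by decide⟩
    · exact ⟨Or.inr hD1, by decide, by decide⟩
    · exact ⟨Or.inr hD2, by decide, by decide⟩

lemma T8f_coe : (T8f : Set (Fin 4 → ℤ)) =
    {![(1 : ℤ), -1, 0, 0], ![(-1 : ℤ), 1, 0, 0],
     ![(1 : ℤ), -1, 1, -1], ![(-1 : ℤ), 1, -1, 1],
     ![(1 : ℤ), -1, -1, 1], ![(-1 : ℤ), 1, 1, -1],
     ![(0 : ℤ), 0, 1, -1], ![(0 : ℤ), 0, -1, 1]} := by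
  simp only [T8f, Finset.coe_insert, Finset.coe_singleton]

/-- Exactly eight of the 42 ray generators lie in `N₄ᵦ`: `±(1,−1,0,0)` of type
B, `±(1,−1,1,−1)` and `±(1,−1,−1,1)` of type C, and `±(0,0,1,−1)` of type D.
Hence the fan `F₄ᵦ = F₆ ∩ N₄ᵦ` has exactly 8 rays: two of type B, four of type
C and two of type D. -/
theorem rays_in_N4b :
    RaySet ∩ N4b =
      {![(1 : ℤ), -1, 0, 0], ![(-1 : ℤ), 1, 0, 0],
       ![(1 : ℤ), -1, 1, -1], ![(-1 : ℤ), 1, -1, 1],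
       ![(1 : ℤ), -1, -1, 1], ![(-1 : ℤ), 1, 1, -1],
       ![(0 : ℤ), 0, 1, -1], ![(0 : ℤ), 0, -1, 1]} ∧
    ![(1 : ℤ), -1, 0, 0] ∈ OB ∧ ![(-1 : ℤ), 1, 0, 0] ∈ OB ∧
    ![(1 : ℤ), -1, 1, -1] ∈ OC ∧ ![(-1 : ℤ), 1, -1, 1] ∈ OC ∧
    ![(1 : ℤ), -1, -1, 1] ∈ OC ∧ ![(-1 : ℤ), 1, 1, -1] ∈ OC ∧
    ![(0 : ℤ), 0, 1, -1] ∈ OD ∧ ![(0 : ℤ), 0, -1, 1] ∈ OD ∧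
    (RaySet ∩ N4b).ncard = 8 := by
  refine ⟨by rw [main_eq, T8f_coe], hB1, hB2, hC1, hC2, hC3, hC4, hD1, hD2, ?_⟩
  rw [main_eq, Set.ncard_coe_finset]
  decide
end

section
/- In the group Γ₆ ⊆ Sym(L), the setwise stabilizer of the pair of unordered triples {{R₁,G₁,B₁}, {R₁,G₂,B₂}} is exactly the subgroup ⟨s_g∘s_b, Cr⟩; it has order 4 and is isomorphic to C₂ × C₂. Moreover, under the linear action of Γ₆ on ℤ^4, this subgroup acts faithfully on the sublattice N₄ᵦ = {(δ,ρ̄,γ̄,β̄) : δ+ρ̄ = 0, γ̄+β̄ = 0}. -/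
open Pointwise

/- The 12-element label set `L = {R₀,R₁,R₂,R₃,G₀,G₁,G₂,G₃,B₀,B₁,B₂,B₃}` is
modeled by `Fin 12` with `Rᵢ = i`, `Gᵢ = 4 + i`, `Bᵢ = 8 + i`. -/

/-- `c = (R₀G₀B₀)(R₁G₁B₁)(R₂G₂B₂)(R₃G₃B₃)`. -/
def cL : Equiv.Perm (Fin 12) where
  toFun k := k + 4
  invFun k := k + 8
  left_inv := by decide
  right_inv := by decide

/-- `s_r = (R₁R₂)`. -/
def srL : Equiv.Perm (Fin 12) := Equiv.swap 1 2
/-- `s_g = (G₁G₂)`. -/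
def sgL : Equiv.Perm (Fin 12) := Equiv.swap 5 6
/-- `s_b = (B₁B₂)`. -/
def sbL : Equiv.Perm (Fin 12) := Equiv.swap 9 10
/-- `Cr = (R₀R₃)(G₀G₃)(B₀B₃)`. -/
def crL : Equiv.Perm (Fin 12) :=
  Equiv.swap 0 3 * Equiv.swap 4 7 * Equiv.swap 8 11

/-- The relabeling group `Γ₆ = ⟨c, s_r, s_g, s_b, Cr⟩ ⊆ Sym(L)`. -/
def Γ6 : Subgroup (Equiv.Perm (Fin 12)) :=
  Subgroup.closure {cL, srL, sgL, sbL, crL}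
/-- The pair of triples `{R₁,G₁,B₁}, {R₁,G₂,B₂}` (the incidence points `P₁₁₁`
and `P₁₂₂` of degree-4 nodal Burniat configurations). -/
def T4btriples : Set (Set (Fin 12)) := {{1, 5, 9}, {1, 6, 10}}

/-- The degree-4 nodal relabeling group `Γ₄ᵦ = ⟨s_g∘s_b, Cr⟩` acting linearly on
`ℤ^4`. -/
def Γ4blin : Subgroup (Equiv.Perm (Fin 4 → ℤ)) := Subgroup.closure {sgP * sbP, crP}

set_option maxRecDepth 100000

/-! ### Auxiliary: Klein-four closure of two commuting involutions -/

theorem mem_closure_pair {G : Type*} [Group G] {a b : G} (ha : a * a = 1) (hb : b * b = 1)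
    (hab : a * b = b * a) (x : G) :
    x ∈ Subgroup.closure {a, b} ↔ x = 1 ∨ x = a ∨ x = b ∨ x = a * b := by
  have haz : ∀ z, a * (a * z) = z := fun z => by rw [← mul_assoc, ha, one_mul]
  have hbz : ∀ z, b * (b * z) = z := fun z => by rw [← mul_assoc, hb, one_mul]
  have hba : ∀ z, b * (a * z) = a * (b * z) := fun z => by
    rw [← mul_assoc, ← hab, mul_assoc]
  have hbab : b * (a * b) = a := by rw [hab, hbz]
  have habab : (a * b) * (a * b) = 1 := by rw [mul_assoc, hbab, ha]
  constructor
  · intro hx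
    induction hx using Subgroup.closure_induction with
    | mem g hg =>
      rcases hg with rfl | rfl
      · exact Or.inr (Or.inl rfl)
      · exact Or.inr (Or.inr (Or.inl rfl))
    | one => exact Or.inl rfl
    | mul x y hx hy ihx ihy =>
      rcases ihx with rfl | rfl | rfl | rfl <;> rcases ihy with rfl | rfl | rfl | rfl <;>
        simp only [one_mul, mul_one, mul_assoc, ha, hb, haz, hbz, hba, ← hab] <;> tauto
    | inv x hx ih =>
      rcases ih with rfl | rfl | rfl | rfl
      · exact Or.inl inv_one
      · exact Or.inr (Or.inl (inv_eq_of_mul_eq_one_right ha))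
      · exact Or.inr (Or.inr (Or.inl (inv_eq_of_mul_eq_one_right hb)))
      · exact Or.inr (Or.inr (Or.inr (inv_eq_of_mul_eq_one_right habab)))
  · have hma : a ∈ Subgroup.closure {a, b} := Subgroup.subset_closure (Or.inl rfl)
    have hmb : b ∈ Subgroup.closure {a, b} := Subgroup.subset_closure (Or.inr rfl)
    rintro (rfl | rfl | rfl | rfl)
    · exact one_mem _
    · exact hma
    · exact hmb
    · exact mul_mem hma hmb

/-! ### Auxiliary: data-level encoding of permutations of `Fin 12` -/

/-- Encode a permutation of `Fin 12` as the list of values. -/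
def encL (g : Equiv.Perm (Fin 12)) : List ℕ := List.ofFn fun i => (g i : ℕ)

/-- Data-level composition of encoded permutations. -/
def compL (u v : List ℕ) : List ℕ := v.map fun j => u.getD j 0

lemma getD_encL (g : Equiv.Perm (Fin 12)) (i : Fin 12) :
    (encL g).getD i.val 0 = (g i : ℕ) := by
  rw [encL, List.getD_eq_getElem?_getD, List.getElem?_ofFn]
  simp [List.ofFnNthVal, i.isLt]

lemma encL_mul (x y : Equiv.Perm (Fin 12)) : encL (x * y) = compL (encL x) (encL y) := by
  unfold compL encL
  rw [List.map_ofFn]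
  refine congrArg _ (funext fun i => ?_)
  show ((x * y) i : ℕ) = (encL x).getD ((y i : ℕ)) 0
  rw [Equiv.Perm.mul_apply, getD_encL]

lemma encL_inj {x y : Equiv.Perm (Fin 12)} (h : encL x = encL y) : x = y := by
  have h2 := List.ofFn_injective h
  exact Equiv.ext fun i => Fin.val_injective (congrFun h2 i)

lemma encL_ne {x y : Equiv.Perm (Fin 12)} (h : encL x ≠ encL y) : x ≠ y :=
  fun hxy => h (congrArg encL hxy)

/-- The 48 elements of `Γ₆`, as value lists. -/
def Ld : List (List ℕ) :=
  [[0, 1, 2, 3, 4, 5, 6, 7, 8, 9, 10, 11],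
  [3, 1, 2, 0, 7, 5, 6, 4, 11, 9, 10, 8],
  [0, 1, 2, 3, 4, 5, 6, 7, 8, 10, 9, 11],
  [3, 1, 2, 0, 7, 5, 6, 4, 11, 10, 9, 8],
  [0, 1, 2, 3, 4, 6, 5, 7, 8, 9, 10, 11],
  [3, 1, 2, 0, 7, 6, 5, 4, 11, 9, 10, 8],
  [0, 1, 2, 3, 4, 6, 5, 7, 8, 10, 9, 11],
  [3, 1, 2, 0, 7, 6, 5, 4, 11, 10, 9, 8],
  [0, 2, 1, 3, 4, 5, 6, 7, 8, 9, 10, 11],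
  [3, 2, 1, 0, 7, 5, 6, 4, 11, 9, 10, 8],
  [0, 2, 1, 3, 4, 5, 6, 7, 8, 10, 9, 11],
  [3, 2, 1, 0, 7, 5, 6, 4, 11, 10, 9, 8],
  [0, 2, 1, 3, 4, 6, 5, 7, 8, 9, 10, 11],
  [3, 2, 1, 0, 7, 6, 5, 4, 11, 9, 10, 8],
  [0, 2, 1, 3, 4, 6, 5, 7, 8, 10, 9, 11],
  [3, 2, 1, 0, 7, 6, 5, 4, 11, 10, 9, 8],
  [4, 5, 6, 7, 8, 9, 10, 11, 0, 1, 2, 3],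
  [7, 5, 6, 4, 11, 9, 10, 8, 3, 1, 2, 0],
  [4, 5, 6, 7, 8, 9, 10, 11, 0, 2, 1, 3],
  [7, 5, 6, 4, 11, 9, 10, 8, 3, 2, 1, 0],
  [4, 5, 6, 7, 8, 10, 9, 11, 0, 1, 2, 3],
  [7, 5, 6, 4, 11, 10, 9, 8, 3, 1, 2, 0],
  [4, 5, 6, 7, 8, 10, 9, 11, 0, 2, 1, 3],
  [7, 5, 6, 4, 11, 10, 9, 8, 3, 2, 1, 0],
  [4, 6, 5, 7, 8, 9, 10, 11, 0, 1, 2, 3],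
  [7, 6, 5, 4, 11, 9, 10, 8, 3, 1, 2, 0],
  [4, 6, 5, 7, 8, 9, 10, 11, 0, 2, 1, 3],
  [7, 6, 5, 4, 11, 9, 10, 8, 3, 2, 1, 0],
  [4, 6, 5, 7, 8, 10, 9, 11, 0, 1, 2, 3],
  [7, 6, 5, 4, 11, 10, 9, 8, 3, 1, 2, 0],
  [4, 6, 5, 7, 8, 10, 9, 11, 0, 2, 1, 3],
  [7, 6, 5, 4, 11, 10, 9, 8, 3, 2, 1, 0],
  [8, 9, 10, 11, 0, 1, 2, 3, 4, 5, 6, 7],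
  [11, 9, 10, 8, 3, 1, 2, 0, 7, 5, 6, 4],
  [8, 9, 10, 11, 0, 1, 2, 3, 4, 6, 5, 7],
  [11, 9, 10, 8, 3, 1, 2, 0, 7, 6, 5, 4],
  [8, 9, 10, 11, 0, 2, 1, 3, 4, 5, 6, 7],
  [11, 9, 10, 8, 3, 2, 1, 0, 7, 5, 6, 4],
  [8, 9, 10, 11, 0, 2, 1, 3, 4, 6, 5, 7],
  [11, 9, 10, 8, 3, 2, 1, 0, 7, 6, 5, 4],
  [8, 10, 9, 11, 0, 1, 2, 3, 4, 5, 6, 7],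
  [11, 10, 9, 8, 3, 1, 2, 0, 7, 5, 6, 4],
  [8, 10, 9, 11, 0, 1, 2, 3, 4, 6, 5, 7],
  [11, 10, 9, 8, 3, 1, 2, 0, 7, 6, 5, 4],
  [8, 10, 9, 11, 0, 2, 1, 3, 4, 5, 6, 7],
  [11, 10, 9, 8, 3, 2, 1, 0, 7, 5, 6, 4],
  [8, 10, 9, 11, 0, 2, 1, 3, 4, 6, 5, 7],
  [11, 10, 9, 8, 3, 2, 1, 0, 7, 6, 5, 4]]

lemma Ld_mul : ∀ u ∈ Ld, ∀ v ∈ Ld, compL u v ∈ Ld := by decide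
lemma Ld_one : encL 1 ∈ Ld := by decide
lemma Ld_c : encL cL ∈ Ld := by decide
lemma Ld_sr : encL srL ∈ Ld := by decide
lemma Ld_sg : encL sgL ∈ Ld := by decide
lemma Ld_sb : encL sbL ∈ Ld := by decide
lemma Ld_cr : encL crL ∈ Ld := by decide

/-- The decidable triple-preservation predicate. -/
def Qd (u : List ℕ) : Prop :=
  (((u.getD 1 0 = 1 ∨ u.getD 1 0 = 5 ∨ u.getD 1 0 = 9) ∧ (u.getD 5 0 = 1 ∨ u.getD 5 0 = 5 ∨ u.getD 5 0 = 9) ∧ (u.getD 9 0 = 1 ∨ u.getD 9 0 = 5 ∨ u.getD 9 0 = 9)) ∨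
   ((u.getD 1 0 = 1 ∨ u.getD 1 0 = 6 ∨ u.getD 1 0 = 10) ∧ (u.getD 5 0 = 1 ∨ u.getD 5 0 = 6 ∨ u.getD 5 0 = 10) ∧ (u.getD 9 0 = 1 ∨ u.getD 9 0 = 6 ∨ u.getD 9 0 = 10))) ∧
  (((u.getD 1 0 = 1 ∨ u.getD 1 0 = 5 ∨ u.getD 1 0 = 9) ∧ (u.getD 6 0 = 1 ∨ u.getD 6 0 = 5 ∨ u.getD 6 0 = 9) ∧ (u.getD 10 0 = 1 ∨ u.getD 10 0 = 5 ∨ u.getD 10 0 = 9)) ∨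
   ((u.getD 1 0 = 1 ∨ u.getD 1 0 = 6 ∨ u.getD 1 0 = 10) ∧ (u.getD 6 0 = 1 ∨ u.getD 6 0 = 6 ∨ u.getD 6 0 = 10) ∧ (u.getD 10 0 = 1 ∨ u.getD 10 0 = 6 ∨ u.getD 10 0 = 10)))

instance : DecidablePred Qd := fun u => by unfold Qd; infer_instance

lemma Ld_Q : ∀ u ∈ Ld, Qd u →
    u = encL 1 ∨ u = encL (sgL * sbL) ∨ u = encL crL ∨ u = encL (sgL * sbL * crL) := by
  decide

lemma atomc (g : Equiv.Perm (Fin 12)) {i j : Fin 12} (h : g i = j) :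
    (encL g).getD i.val 0 = j.val := by rw [getD_encL, h]

/-- `Γ₆` as a set with decidable data-level description. -/
def E6 : Subgroup (Equiv.Perm (Fin 12)) where
  carrier := {g | encL g ∈ Ld}
  one_mem' := Ld_one
  mul_mem' := fun {x y} hx hy => by
    show encL (x * y) ∈ Ld
    rw [encL_mul]; exact Ld_mul _ hx _ hy
  inv_mem' := fun {x} hx => by
    have hpow : ∀ n, encL (x ^ n) ∈ Ld := by
      intro n
      induction n with
      | zero => simpa using Ld_one
      | succ k ih => rw [pow_succ, encL_mul]; exact Ld_mul _ ih _ hx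
    have h0 : orderOf x ≠ 0 := (orderOf_pos x).ne'
    have hx1 : x ^ (orderOf x - 1) = x⁻¹ := by
      apply eq_inv_of_mul_eq_one_left
      rw [← pow_succ, Nat.sub_add_cancel (Nat.one_le_iff_ne_zero.mpr h0), pow_orderOf_eq_one]
    show encL x⁻¹ ∈ Ld
    rw [← hx1]; exact hpow _

lemma Γ6_le_E6 : Γ6 ≤ E6 := by
  rw [Γ6, Subgroup.closure_le]
  rintro g (rfl | rfl | rfl | rfl | rfl)
  · exact Ld_c
  · exact Ld_sr
  · exact Ld_sg
  · exact Ld_sb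
  · exact Ld_cr

/-! ### The four elements of the stabilizer -/

lemma haL : (sgL * sbL) * (sgL * sbL) = 1 := by
  apply encL_inj; rw [encL_mul]; decide
lemma hbL : crL * crL = 1 := by
  apply encL_inj; rw [encL_mul]; decide
lemma habL : (sgL * sbL) * crL = crL * (sgL * sbL) := by
  apply encL_inj; rw [encL_mul, encL_mul]; decide

lemma ne1a : (1 : Equiv.Perm (Fin 12)) ≠ sgL * sbL := encL_ne (by decide)
lemma ne1b : (1 : Equiv.Perm (Fin 12)) ≠ crL := encL_ne (by decide)
lemma ne1c : (1 : Equiv.Perm (Fin 12)) ≠ sgL * sbL * crL := encL_ne (by rw [encL_mul]; decide)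
lemma neab : sgL * sbL ≠ crL := encL_ne (by decide)
lemma neac : sgL * sbL ≠ sgL * sbL * crL := encL_ne (by rw [encL_mul]; decide)
lemma nebc : crL ≠ sgL * sbL * crL := encL_ne (by rw [encL_mul]; decide)

/-! ### Stabilizer membership of the generators -/

lemma smul159 (g : Equiv.Perm (Fin 12)) :
    g • ({1, 5, 9} : Set (Fin 12)) = {g 1, g 5, g 9} := by
  rw [Set.smul_set_insert, Set.smul_set_insert, Set.smul_set_singleton]; rfl

lemma smul1610 (g : Equiv.Perm (Fin 12)) :
    g • ({1, 6, 10} : Set (Fin 12)) = {g 1, g 6, g 10} := by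
  rw [Set.smul_set_insert, Set.smul_set_insert, Set.smul_set_singleton]; rfl

lemma sgsb_stab : (sgL * sbL) • T4btriples = T4btriples := by
  show (sgL * sbL) • ({{1, 5, 9}, {1, 6, 10}} : Set (Set (Fin 12))) = T4btriples
  rw [Set.smul_set_insert, Set.smul_set_singleton, smul159, smul1610,
    show (sgL * sbL) 1 = 1 from by decide, show (sgL * sbL) 5 = 6 from by decide,
    show (sgL * sbL) 9 = 10 from by decide, show (sgL * sbL) 6 = 5 from by decide,
    show (sgL * sbL) 10 = 9 from by decide]
  exact Set.pair_comm _ _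

lemma h4L : (sgL * sbL * crL) * (sgL * sbL * crL) = 1 := by
  apply encL_inj; rw [encL_mul]; decide

lemma cr_stab : crL • T4btriples = T4btriples := by
  show crL • ({{1, 5, 9}, {1, 6, 10}} : Set (Set (Fin 12))) = T4btriples
  rw [Set.smul_set_insert, Set.smul_set_singleton, smul159, smul1610,
    show crL 1 = 1 from by decide, show crL 5 = 5 from by decide,
    show crL 9 = 9 from by decide, show crL 6 = 6 from by decide,
    show crL 10 = 10 from by decide]
  rfl

/-! ### The `ℤ⁴` side -/

lemma sgP_apply (v : Fin 4 → ℤ) : sgP v = ![v 0, v 1, -v 2, v 3] := rfl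
lemma sbP_apply (v : Fin 4 → ℤ) : sbP v = ![v 0, v 1, v 2, -v 3] := rfl
lemma crP_apply (v : Fin 4 → ℤ) : crP v = -v := rfl

lemma haP : (sgP * sbP) * (sgP * sbP) = 1 := by
  apply Equiv.ext; intro v
  funext i
  fin_cases i <;>
    simp [Equiv.Perm.mul_apply, sgP_apply, sbP_apply]

lemma hbP : crP * crP = 1 := by
  apply Equiv.ext; intro v
  funext i
  fin_cases i <;>
    simp [Equiv.Perm.mul_apply, crP_apply]

lemma habP : (sgP * sbP) * crP = crP * (sgP * sbP) := by
  apply Equiv.ext; intro v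
  funext i
  fin_cases i <;>
    simp [Equiv.Perm.mul_apply, sgP_apply, sbP_apply, crP_apply, Pi.neg_apply]

lemma neP1a : (1 : Equiv.Perm (Fin 4 → ℤ)) ≠ sgP * sbP := by
  intro h
  have h2 := congrFun (congrArg (fun e : Equiv.Perm (Fin 4 → ℤ) => e ![1, 1, 1, 1]) h) 2
  norm_num [Equiv.Perm.mul_apply, sgP_apply, sbP_apply, Matrix.cons_val_two, Matrix.cons_val_three] at h2

lemma neP1b : (1 : Equiv.Perm (Fin 4 → ℤ)) ≠ crP := by
  intro h
  have h2 := congrFun (congrArg (fun e : Equiv.Perm (Fin 4 → ℤ) => e ![1, 1, 1, 1]) h) 0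
  norm_num [crP_apply, Pi.neg_apply] at h2

lemma neP1c : (1 : Equiv.Perm (Fin 4 → ℤ)) ≠ sgP * sbP * crP := by
  intro h
  have h2 := congrFun (congrArg (fun e : Equiv.Perm (Fin 4 → ℤ) => e ![1, 1, 1, 1]) h) 0
  norm_num [Equiv.Perm.mul_apply, sgP_apply, sbP_apply, crP_apply, Pi.neg_apply] at h2

lemma nePab : sgP * sbP ≠ crP := by
  intro h
  have h2 := congrFun (congrArg (fun e : Equiv.Perm (Fin 4 → ℤ) => e ![1, 1, 1, 1]) h) 0
  norm_num [Equiv.Perm.mul_apply, sgP_apply, sbP_apply, crP_apply, Pi.neg_apply] at h2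

lemma nePac : sgP * sbP ≠ sgP * sbP * crP := by
  intro h
  have h2 := congrFun (congrArg (fun e : Equiv.Perm (Fin 4 → ℤ) => e ![1, 1, 1, 1]) h) 0
  norm_num [Equiv.Perm.mul_apply, sgP_apply, sbP_apply, crP_apply, Pi.neg_apply] at h2

lemma nePbc : crP ≠ sgP * sbP * crP := by
  intro h
  have h2 := congrFun (congrArg (fun e : Equiv.Perm (Fin 4 → ℤ) => e ![1, 1, 1, 1]) h) 2
  norm_num [Equiv.Perm.mul_apply, sgP_apply, sbP_apply, crP_apply, Pi.neg_apply, Matrix.cons_val_two, Matrix.cons_val_three] at h2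

/-- The setwise stabilizer in `Γ₆` of `{{R₁,G₁,B₁}, {R₁,G₂,B₂}}` is exactly
`⟨s_g∘s_b, Cr⟩`; it has order 4 and is isomorphic to `C₂ × C₂`. Moreover, under
the linear `Γ₆`-action on `ℤ^4` this subgroup acts faithfully on `N₄ᵦ`. -/
theorem stabilizer_deg4b :
    Γ6 ⊓ MulAction.stabilizer (Equiv.Perm (Fin 12)) T4btriples =
      Subgroup.closure {sgL * sbL, crL} ∧
    Nat.card (Subgroup.closure {sgL * sbL, crL} : Subgroup (Equiv.Perm (Fin 12))) = 4 ∧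
    Nonempty ((Subgroup.closure {sgL * sbL, crL} : Subgroup (Equiv.Perm (Fin 12))) ≃*
      Multiplicative (ZMod 2) × Multiplicative (ZMod 2)) ∧
    Nat.card Γ4blin = 4 ∧
    (∀ g ∈ Γ4blin, (∀ v ∈ N4b, g v = v) → g = 1) := by
  have conv3 : ∀ (g : Equiv.Perm (Fin 12)) (i j k l : Fin 12), g i ∈ ({j, k, l} : Set (Fin 12)) →
      ((encL g).getD i.val 0 = j.val ∨ (encL g).getD i.val 0 = k.val ∨
        (encL g).getD i.val 0 = l.val) :=
    fun g i j k l h => h.imp (atomc g) fun h' => h'.imp (atomc g) (atomc g)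
  have part1 : Γ6 ⊓ MulAction.stabilizer (Equiv.Perm (Fin 12)) T4btriples =
      Subgroup.closure {sgL * sbL, crL} := by
    apply le_antisymm
    · intro g hg
      obtain ⟨hg6, hgs⟩ := Subgroup.mem_inf.mp hg
      have hE : encL g ∈ Ld := Γ6_le_E6 hg6
      have hstab : g • T4btriples = T4btriples := MulAction.mem_stabilizer_iff.mp hgs
      have key : ∀ t ∈ T4btriples, g • t ∈ T4btriples := fun t ht => by
        rw [← hstab]; exact Set.smul_mem_smul_set ht
      have q1 := key {1, 5, 9} (Or.inl rfl)
      have q2 := key {1, 6, 10} (Or.inr rfl)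
      rw [smul159] at q1
      rw [smul1610] at q2
      have hQ : Qd (encL g) := by
        constructor
        · rcases q1 with hq | hq
          · exact Or.inl ⟨conv3 g 1 1 5 9 ((Set.ext_iff.mp hq (g 1)).mp (Or.inl rfl)),
              conv3 g 5 1 5 9 ((Set.ext_iff.mp hq (g 5)).mp (Or.inr (Or.inl rfl))),
              conv3 g 9 1 5 9 ((Set.ext_iff.mp hq (g 9)).mp (Or.inr (Or.inr rfl)))⟩
          · exact Or.inr ⟨conv3 g 1 1 6 10 ((Set.ext_iff.mp hq (g 1)).mp (Or.inl rfl)),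
              conv3 g 5 1 6 10 ((Set.ext_iff.mp hq (g 5)).mp (Or.inr (Or.inl rfl))),
              conv3 g 9 1 6 10 ((Set.ext_iff.mp hq (g 9)).mp (Or.inr (Or.inr rfl)))⟩
        · rcases q2 with hq | hq
          · exact Or.inl ⟨conv3 g 1 1 5 9 ((Set.ext_iff.mp hq (g 1)).mp (Or.inl rfl)),
              conv3 g 6 1 5 9 ((Set.ext_iff.mp hq (g 6)).mp (Or.inr (Or.inl rfl))),
              conv3 g 10 1 5 9 ((Set.ext_iff.mp hq (g 10)).mp (Or.inr (Or.inr rfl)))⟩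
          · exact Or.inr ⟨conv3 g 1 1 6 10 ((Set.ext_iff.mp hq (g 1)).mp (Or.inl rfl)),
              conv3 g 6 1 6 10 ((Set.ext_iff.mp hq (g 6)).mp (Or.inr (Or.inl rfl))),
              conv3 g 10 1 6 10 ((Set.ext_iff.mp hq (g 10)).mp (Or.inr (Or.inr rfl)))⟩
      have hfour := Ld_Q _ hE hQ
      rw [mem_closure_pair haL hbL habL]
      rcases hfour with h | h | h | h
      · exact Or.inl (encL_inj h)
      · exact Or.inr (Or.inl (encL_inj h))
      · exact Or.inr (Or.inr (Or.inl (encL_inj h)))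
      · exact Or.inr (Or.inr (Or.inr (encL_inj h)))
    · rw [Subgroup.closure_le]
      rintro g (rfl | rfl)
      · exact Subgroup.mem_inf.mpr
          ⟨mul_mem (Subgroup.subset_closure (Or.inr (Or.inr (Or.inl rfl))))
              (Subgroup.subset_closure (Or.inr (Or.inr (Or.inr (Or.inl rfl))))),
            MulAction.mem_stabilizer_iff.mpr sgsb_stab⟩
      · exact Subgroup.mem_inf.mpr
          ⟨Subgroup.subset_closure (Or.inr (Or.inr (Or.inr (Or.inr rfl)))),
            MulAction.mem_stabilizer_iff.mpr cr_stab⟩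
  have hsetL : ((Subgroup.closure {sgL * sbL, crL} : Subgroup (Equiv.Perm (Fin 12))) : Set _) =
      {1, sgL * sbL, crL, sgL * sbL * crL} :=
    Set.ext fun x => mem_closure_pair haL hbL habL x
  have card4L : Nat.card (Subgroup.closure {sgL * sbL, crL} :
      Subgroup (Equiv.Perm (Fin 12))) = 4 := by
    rw [← SetLike.coe_sort_coe, hsetL, Nat.card_coe_set_eq,
      Set.ncard_insert_of_notMem (by
        simp only [Set.mem_insert_iff, Set.mem_singleton_iff, not_or]
        exact ⟨ne1a, ne1b, ne1c⟩) (Set.toFinite _),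
      Set.ncard_insert_of_notMem (by
        simp only [Set.mem_insert_iff, Set.mem_singleton_iff, not_or]
        exact ⟨neab, neac⟩) (Set.toFinite _),
      Set.ncard_insert_of_notMem (by
        simp only [Set.mem_singleton_iff]
        exact nebc) (Set.toFinite _),
      Set.ncard_singleton]
  have instKF : IsKleinFour (Subgroup.closure {sgL * sbL, crL} :
      Subgroup (Equiv.Perm (Fin 12))) := by
    have hnt : Nontrivial (Subgroup.closure {sgL * sbL, crL} :
        Subgroup (Equiv.Perm (Fin 12))) :=
      ⟨⟨⟨sgL * sbL, Subgroup.subset_closure (Or.inl rfl)⟩, 1, by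
        intro h
        exact ne1a (congrArg Subtype.val h).symm⟩⟩
    refine ⟨card4L, ?_⟩
    rw [Monoid.exponent_eq_prime_iff Nat.prime_two]
    intro gg hgg
    refine orderOf_eq_prime ?_ hgg
    have hm := gg.2
    rw [mem_closure_pair haL hbL habL] at hm
    apply Subtype.ext
    rw [pow_two]
    show (gg : Equiv.Perm (Fin 12)) * gg = 1
    rcases hm with h | h | h | h <;> rw [h]
    · exact one_mul 1
    · exact haL
    · exact hbL
    · exact h4L
  have instKF2 : IsKleinFour (Multiplicative (ZMod 2) × Multiplicative (ZMod 2)) := by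
    constructor
    · rw [Nat.card_prod]
      simp [Nat.card_eq_fintype_card]
    · rw [Monoid.exponent_prod]
      simp
  have hsetP : ((Γ4blin : Subgroup (Equiv.Perm (Fin 4 → ℤ))) : Set _) =
      {1, sgP * sbP, crP, sgP * sbP * crP} :=
    Set.ext fun x => mem_closure_pair haP hbP habP x
  have card4P : Nat.card Γ4blin = 4 := by
    rw [← SetLike.coe_sort_coe, hsetP, Nat.card_coe_set_eq,
      Set.ncard_insert_of_notMem (by
        simp only [Set.mem_insert_iff, Set.mem_singleton_iff, not_or]
        exact ⟨neP1a, neP1b, neP1c⟩) (Set.toFinite _),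
      Set.ncard_insert_of_notMem (by
        simp only [Set.mem_insert_iff, Set.mem_singleton_iff, not_or]
        exact ⟨nePab, nePac⟩) (Set.toFinite _),
      Set.ncard_insert_of_notMem (by
        simp only [Set.mem_singleton_iff]
        exact nePbc) (Set.toFinite _),
      Set.ncard_singleton]
  refine ⟨part1, card4L, IsKleinFour.nonempty_mulEquiv, card4P, ?_⟩
  intro g hg hfix
  rw [Γ4blin, mem_closure_pair haP hbP habP] at hg
  have hva : (![1, -1, 0, 0] : Fin 4 → ℤ) ∈ N4b := by constructor <;> norm_num [Matrix.cons_val_two, Matrix.cons_val_three]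
  have hvb : (![0, 0, 1, -1] : Fin 4 → ℤ) ∈ N4b := by constructor <;> norm_num [Matrix.cons_val_two, Matrix.cons_val_three]
  rcases hg with rfl | rfl | rfl | rfl
  · rfl
  · exfalso
    have h2 := congrFun (hfix _ hvb) 2
    norm_num [Equiv.Perm.mul_apply, sgP_apply, sbP_apply, Matrix.cons_val_two, Matrix.cons_val_three] at h2
  · exfalso
    have h2 := congrFun (hfix _ hva) 0
    norm_num [crP_apply, Pi.neg_apply] at h2
  · exfalso
    have h2 := congrFun (hfix _ hva) 0
    norm_num [Equiv.Perm.mul_apply, sgP_apply, sbP_apply, crP_apply, Pi.neg_apply] at h2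
end

section
/- Exactly eighteen elements of the 42-element set R of ray generators lie in the sublattice N₅ = {(δ,ρ̄,γ̄,β̄) ∈ ℤ^4 : δ+ρ̄+γ̄+β̄ = 0}, and they comprise three orbits, each of cardinality 6, under the subgroup Γ₅ = ⟨c, Cr⟩ acting linearly on ℤ^4: the orbit of (1,0,0,−1) (type B), the orbit of (1,1,−1,−1) (type C), and the orbit of (0,1,−1,0) (type D). Hence the fan F₅ = F₆ ∩ N₅ has exactly 18 rays, six each of types B, C, D. -/
/-- `N₅ = {(δ,ρ̄,γ̄,β̄) ∈ ℤ^4 : δ+ρ̄+γ̄+β̄ = 0}`, the cocharacter lattice of the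
subtorus `T₅ ⊂ T₆` defined by `r₁g₁b₁ = 1`. -/
def N5 : Set (Fin 4 → ℤ) := {v | v 0 + v 1 + v 2 + v 3 = 0}

/-- The degree-5 relabeling group `Γ₅ = ⟨c, Cr⟩` acting linearly on `ℤ^4`. -/
def Γ5lin : Subgroup (Equiv.Perm (Fin 4 → ℤ)) := Subgroup.closure {cP, crP}

/-- The `Γ₅`-orbit of `(1,0,0,−1)` (type B rays of `F₅`). -/
def O5B : Set (Fin 4 → ℤ) := MulAction.orbit Γ5lin ![1, 0, 0, -1]
/-- The `Γ₅`-orbit of `(1,1,−1,−1)` (type C rays of `F₅`). -/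
def O5C : Set (Fin 4 → ℤ) := MulAction.orbit Γ5lin ![1, 1, -1, -1]
/-- The `Γ₅`-orbit of `(0,1,−1,0)` (type D rays of `F₅`). -/
def O5D : Set (Fin 4 → ℤ) := MulAction.orbit Γ5lin ![0, 1, -1, 0]


lemma orbitSubset {T : Set (Equiv.Perm (Fin 4 → ℤ))} {F : Finset (Fin 4 → ℤ)} {x : Fin 4 → ℤ}
    (hx : x ∈ F) (h : ∀ σ ∈ T, ∀ v ∈ F, σ v ∈ F ∧ σ⁻¹ v ∈ F) :
    MulAction.orbit (Subgroup.closure T) x ⊆ ↑F := by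
  rintro _ ⟨⟨g, hg⟩, rfl⟩
  have key : ∀ g' ∈ Subgroup.closure T, (∀ v ∈ F, g' v ∈ F) ∧ (∀ v ∈ F, g'⁻¹ v ∈ F) := by
    intro g' hg'
    induction hg' using Subgroup.closure_induction with
    | mem σ hσ =>
      exact ⟨fun v hv => (h σ hσ v hv).1, fun v hv => (h σ hσ v hv).2⟩
    | one => exact ⟨fun v hv => hv, fun v hv => by simpa using hv⟩
    | mul a b ha hb iha ihb =>
      refine ⟨fun v hv => ?_, fun v hv => ?_⟩
      · simpa [Equiv.Perm.mul_apply] using iha.1 _ (ihb.1 v hv)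
      · simpa [mul_inv_rev, Equiv.Perm.mul_apply] using ihb.2 _ (iha.2 v hv)
    | inv a ha iha =>
      exact ⟨iha.2, fun v hv => by simpa using iha.1 v hv⟩
  exact Finset.mem_coe.mpr ((key g hg).1 x hx)

def FOA : Finset (Fin 4 → ℤ) := {![2, 0, 0, 0], ![-2, 0, 0, 0]}

lemma OA_eq : OA = ↑FOA := by
  apply Set.Subset.antisymm
  · apply orbitSubset (by decide)
    intro σ hσ
    simp only [Set.mem_insert_iff, Set.mem_singleton_iff] at hσ
    rcases hσ with rfl|rfl|rfl|rfl|rfl <;> decide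
  · intro v hv
    rw [Finset.mem_coe] at hv
    have hcm : cP ∈ Γ6lin := Subgroup.subset_closure (by simp)
    have hsrm : srP ∈ Γ6lin := Subgroup.subset_closure (by simp)
    have hsgm : sgP ∈ Γ6lin := Subgroup.subset_closure (by simp)
    have hsbm : sbP ∈ Γ6lin := Subgroup.subset_closure (by simp)
    have hcrm : crP ∈ Γ6lin := Subgroup.subset_closure (by simp)
    fin_cases hv
    · exact ⟨⟨(1 : Equiv.Perm (Fin 4 → ℤ)), one_mem _⟩, by funext i; fin_cases i <;> rfl⟩
    · exact ⟨⟨crP, hcrm⟩, by funext i; fin_cases i <;> rfl⟩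

def FOB : Finset (Fin 4 → ℤ) := {![1, 1, 0, 0], ![1, 0, 1, 0], ![1, -1, 0, 0], ![-1, -1, 0, 0], ![1, 0, 0, 1], ![1, 0, -1, 0], ![-1, 0, -1, 0], ![-1, 1, 0, 0], ![1, 0, 0, -1], ![-1, 0, 0, -1], ![-1, 0, 1, 0], ![-1, 0, 0, 1]}

lemma OB_eq : OB = ↑FOB := by
  apply Set.Subset.antisymm
  · apply orbitSubset (by decide)
    intro σ hσ
    simp only [Set.mem_insert_iff, Set.mem_singleton_iff] at hσ
    rcases hσ with rfl|rfl|rfl|rfl|rfl <;> decide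
  · intro v hv
    rw [Finset.mem_coe] at hv
    have hcm : cP ∈ Γ6lin := Subgroup.subset_closure (by simp)
    have hsrm : srP ∈ Γ6lin := Subgroup.subset_closure (by simp)
    have hsgm : sgP ∈ Γ6lin := Subgroup.subset_closure (by simp)
    have hsbm : sbP ∈ Γ6lin := Subgroup.subset_closure (by simp)
    have hcrm : crP ∈ Γ6lin := Subgroup.subset_closure (by simp)
    fin_cases hv
    · exact ⟨⟨(1 : Equiv.Perm (Fin 4 → ℤ)), one_mem _⟩, by funext i; fin_cases i <;> rfl⟩
    · exact ⟨⟨cP, hcm⟩, by funext i; fin_cases i <;> rfl⟩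
    · exact ⟨⟨srP, hsrm⟩, by funext i; fin_cases i <;> rfl⟩
    · exact ⟨⟨crP, hcrm⟩, by funext i; fin_cases i <;> rfl⟩
    · exact ⟨⟨(cP * cP), (mul_mem hcm hcm)⟩, by funext i; fin_cases i <;> rfl⟩
    · exact ⟨⟨(sgP * cP), (mul_mem hsgm hcm)⟩, by funext i; fin_cases i <;> rfl⟩
    · exact ⟨⟨(crP * cP), (mul_mem hcrm hcm)⟩, by funext i; fin_cases i <;> rfl⟩
    · exact ⟨⟨(crP * srP), (mul_mem hcrm hsrm)⟩, by funext i; fin_cases i <;> rfl⟩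
    · exact ⟨⟨(sbP * (cP * cP)), (mul_mem hsbm (mul_mem hcm hcm))⟩, by funext i; fin_cases i <;> rfl⟩
    · exact ⟨⟨(crP * (cP * cP)), (mul_mem hcrm (mul_mem hcm hcm))⟩, by funext i; fin_cases i <;> rfl⟩
    · exact ⟨⟨(crP * (sgP * cP)), (mul_mem hcrm (mul_mem hsgm hcm))⟩, by funext i; fin_cases i <;> rfl⟩
    · exact ⟨⟨(crP * (sbP * (cP * cP))), (mul_mem hcrm (mul_mem hsbm (mul_mem hcm hcm)))⟩, by funext i; fin_cases i <;> rfl⟩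

def FOC : Finset (Fin 4 → ℤ) := {![1, 1, 1, 1], ![1, -1, 1, 1], ![1, 1, -1, 1], ![1, 1, 1, -1], ![-1, -1, -1, -1], ![1, -1, -1, 1], ![1, -1, 1, -1], ![-1, 1, -1, -1], ![1, 1, -1, -1], ![-1, -1, 1, -1], ![-1, -1, -1, 1], ![1, -1, -1, -1], ![-1, 1, 1, -1], ![-1, 1, -1, 1], ![-1, -1, 1, 1], ![-1, 1, 1, 1]}

lemma OC_eq : OC = ↑FOC := by
  apply Set.Subset.antisymm
  · apply orbitSubset (by decide)
    intro σ hσ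
    simp only [Set.mem_insert_iff, Set.mem_singleton_iff] at hσ
    rcases hσ with rfl|rfl|rfl|rfl|rfl <;> decide
  · intro v hv
    rw [Finset.mem_coe] at hv
    have hcm : cP ∈ Γ6lin := Subgroup.subset_closure (by simp)
    have hsrm : srP ∈ Γ6lin := Subgroup.subset_closure (by simp)
    have hsgm : sgP ∈ Γ6lin := Subgroup.subset_closure (by simp)
    have hsbm : sbP ∈ Γ6lin := Subgroup.subset_closure (by simp)
    have hcrm : crP ∈ Γ6lin := Subgroup.subset_closure (by simp)
    fin_cases hv
    · exact ⟨⟨(1 : Equiv.Perm (Fin 4 → ℤ)), one_mem _⟩, by funext i; fin_cases i <;> rfl⟩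
    · exact ⟨⟨srP, hsrm⟩, by funext i; fin_cases i <;> rfl⟩
    · exact ⟨⟨sgP, hsgm⟩, by funext i; fin_cases i <;> rfl⟩
    · exact ⟨⟨sbP, hsbm⟩, by funext i; fin_cases i <;> rfl⟩
    · exact ⟨⟨crP, hcrm⟩, by funext i; fin_cases i <;> rfl⟩
    · exact ⟨⟨(sgP * srP), (mul_mem hsgm hsrm)⟩, by funext i; fin_cases i <;> rfl⟩
    · exact ⟨⟨(sbP * srP), (mul_mem hsbm hsrm)⟩, by funext i; fin_cases i <;> rfl⟩
    · exact ⟨⟨(crP * srP), (mul_mem hcrm hsrm)⟩, by funext i; fin_cases i <;> rfl⟩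
    · exact ⟨⟨(sbP * sgP), (mul_mem hsbm hsgm)⟩, by funext i; fin_cases i <;> rfl⟩
    · exact ⟨⟨(crP * sgP), (mul_mem hcrm hsgm)⟩, by funext i; fin_cases i <;> rfl⟩
    · exact ⟨⟨(crP * sbP), (mul_mem hcrm hsbm)⟩, by funext i; fin_cases i <;> rfl⟩
    · exact ⟨⟨(sbP * (sgP * srP)), (mul_mem hsbm (mul_mem hsgm hsrm))⟩, by funext i; fin_cases i <;> rfl⟩
    · exact ⟨⟨(crP * (sgP * srP)), (mul_mem hcrm (mul_mem hsgm hsrm))⟩, by funext i; fin_cases i <;> rfl⟩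
    · exact ⟨⟨(crP * (sbP * srP)), (mul_mem hcrm (mul_mem hsbm hsrm))⟩, by funext i; fin_cases i <;> rfl⟩
    · exact ⟨⟨(crP * (sbP * sgP)), (mul_mem hcrm (mul_mem hsbm hsgm))⟩, by funext i; fin_cases i <;> rfl⟩
    · exact ⟨⟨(crP * (sbP * (sgP * srP))), (mul_mem hcrm (mul_mem hsbm (mul_mem hsgm hsrm)))⟩, by funext i; fin_cases i <;> rfl⟩

def FOD : Finset (Fin 4 → ℤ) := {![0, 1, 0, 1], ![0, 1, 1, 0], ![0, -1, 0, 1], ![0, 1, 0, -1], ![0, -1, 0, -1], ![0, 0, 1, 1], ![0, -1, 1, 0], ![0, 1, -1, 0], ![0, -1, -1, 0], ![0, 0, -1, 1], ![0, 0, 1, -1], ![0, 0, -1, -1]}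

lemma OD_eq : OD = ↑FOD := by
  apply Set.Subset.antisymm
  · apply orbitSubset (by decide)
    intro σ hσ
    simp only [Set.mem_insert_iff, Set.mem_singleton_iff] at hσ
    rcases hσ with rfl|rfl|rfl|rfl|rfl <;> decide
  · intro v hv
    rw [Finset.mem_coe] at hv
    have hcm : cP ∈ Γ6lin := Subgroup.subset_closure (by simp)
    have hsrm : srP ∈ Γ6lin := Subgroup.subset_closure (by simp)
    have hsgm : sgP ∈ Γ6lin := Subgroup.subset_closure (by simp)
    have hsbm : sbP ∈ Γ6lin := Subgroup.subset_closure (by simp)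
    have hcrm : crP ∈ Γ6lin := Subgroup.subset_closure (by simp)
    fin_cases hv
    · exact ⟨⟨(1 : Equiv.Perm (Fin 4 → ℤ)), one_mem _⟩, by funext i; fin_cases i <;> rfl⟩
    · exact ⟨⟨cP, hcm⟩, by funext i; fin_cases i <;> rfl⟩
    · exact ⟨⟨srP, hsrm⟩, by funext i; fin_cases i <;> rfl⟩
    · exact ⟨⟨sbP, hsbm⟩, by funext i; fin_cases i <;> rfl⟩
    · exact ⟨⟨crP, hcrm⟩, by funext i; fin_cases i <;> rfl⟩
    · exact ⟨⟨(cP * cP), (mul_mem hcm hcm)⟩, by funext i; fin_cases i <;> rfl⟩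
    · exact ⟨⟨(srP * cP), (mul_mem hsrm hcm)⟩, by funext i; fin_cases i <;> rfl⟩
    · exact ⟨⟨(sgP * cP), (mul_mem hsgm hcm)⟩, by funext i; fin_cases i <;> rfl⟩
    · exact ⟨⟨(crP * cP), (mul_mem hcrm hcm)⟩, by funext i; fin_cases i <;> rfl⟩
    · exact ⟨⟨(sgP * (cP * cP)), (mul_mem hsgm (mul_mem hcm hcm))⟩, by funext i; fin_cases i <;> rfl⟩
    · exact ⟨⟨(sbP * (cP * cP)), (mul_mem hsbm (mul_mem hcm hcm))⟩, by funext i; fin_cases i <;> rfl⟩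
    · exact ⟨⟨(crP * (cP * cP)), (mul_mem hcrm (mul_mem hcm hcm))⟩, by funext i; fin_cases i <;> rfl⟩

def FO5B : Finset (Fin 4 → ℤ) := {![1, 0, 0, -1], ![1, -1, 0, 0], ![-1, 0, 0, 1], ![1, 0, -1, 0], ![-1, 1, 0, 0], ![-1, 0, 1, 0]}

lemma O5B_eq : O5B = ↑FO5B := by
  apply Set.Subset.antisymm
  · apply orbitSubset (by decide)
    intro σ hσ
    simp only [Set.mem_insert_iff, Set.mem_singleton_iff] at hσ
    rcases hσ with rfl|rfl <;> decide
  · intro v hv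
    rw [Finset.mem_coe] at hv
    have hcm : cP ∈ Γ5lin := Subgroup.subset_closure (by simp)
    have hcrm : crP ∈ Γ5lin := Subgroup.subset_closure (by simp)
    fin_cases hv
    · exact ⟨⟨(1 : Equiv.Perm (Fin 4 → ℤ)), one_mem _⟩, by funext i; fin_cases i <;> rfl⟩
    · exact ⟨⟨cP, hcm⟩, by funext i; fin_cases i <;> rfl⟩
    · exact ⟨⟨crP, hcrm⟩, by funext i; fin_cases i <;> rfl⟩
    · exact ⟨⟨(cP * cP), (mul_mem hcm hcm)⟩, by funext i; fin_cases i <;> rfl⟩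
    · exact ⟨⟨(crP * cP), (mul_mem hcrm hcm)⟩, by funext i; fin_cases i <;> rfl⟩
    · exact ⟨⟨(crP * (cP * cP)), (mul_mem hcrm (mul_mem hcm hcm))⟩, by funext i; fin_cases i <;> rfl⟩

def FO5C : Finset (Fin 4 → ℤ) := {![1, 1, -1, -1], ![1, -1, 1, -1], ![-1, -1, 1, 1], ![1, -1, -1, 1], ![-1, 1, -1, 1], ![-1, 1, 1, -1]}

lemma O5C_eq : O5C = ↑FO5C := by
  apply Set.Subset.antisymm
  · apply orbitSubset (by decide)
    intro σ hσ
    simp only [Set.mem_insert_iff, Set.mem_singleton_iff] at hσ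
    rcases hσ with rfl|rfl <;> decide
  · intro v hv
    rw [Finset.mem_coe] at hv
    have hcm : cP ∈ Γ5lin := Subgroup.subset_closure (by simp)
    have hcrm : crP ∈ Γ5lin := Subgroup.subset_closure (by simp)
    fin_cases hv
    · exact ⟨⟨(1 : Equiv.Perm (Fin 4 → ℤ)), one_mem _⟩, by funext i; fin_cases i <;> rfl⟩
    · exact ⟨⟨cP, hcm⟩, by funext i; fin_cases i <;> rfl⟩
    · exact ⟨⟨crP, hcrm⟩, by funext i; fin_cases i <;> rfl⟩
    · exact ⟨⟨(cP * cP), (mul_mem hcm hcm)⟩, by funext i; fin_cases i <;> rfl⟩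
    · exact ⟨⟨(crP * cP), (mul_mem hcrm hcm)⟩, by funext i; fin_cases i <;> rfl⟩
    · exact ⟨⟨(crP * (cP * cP)), (mul_mem hcrm (mul_mem hcm hcm))⟩, by funext i; fin_cases i <;> rfl⟩

def FO5D : Finset (Fin 4 → ℤ) := {![0, 1, -1, 0], ![0, 0, 1, -1], ![0, -1, 1, 0], ![0, -1, 0, 1], ![0, 0, -1, 1], ![0, 1, 0, -1]}

lemma O5D_eq : O5D = ↑FO5D := by
  apply Set.Subset.antisymm
  · apply orbitSubset (by decide)
    intro σ hσ
    simp only [Set.mem_insert_iff, Set.mem_singleton_iff] at hσ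
    rcases hσ with rfl|rfl <;> decide
  · intro v hv
    rw [Finset.mem_coe] at hv
    have hcm : cP ∈ Γ5lin := Subgroup.subset_closure (by simp)
    have hcrm : crP ∈ Γ5lin := Subgroup.subset_closure (by simp)
    fin_cases hv
    · exact ⟨⟨(1 : Equiv.Perm (Fin 4 → ℤ)), one_mem _⟩, by funext i; fin_cases i <;> rfl⟩
    · exact ⟨⟨cP, hcm⟩, by funext i; fin_cases i <;> rfl⟩
    · exact ⟨⟨crP, hcrm⟩, by funext i; fin_cases i <;> rfl⟩
    · exact ⟨⟨(cP * cP), (mul_mem hcm hcm)⟩, by funext i; fin_cases i <;> rfl⟩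
    · exact ⟨⟨(crP * cP), (mul_mem hcrm hcm)⟩, by funext i; fin_cases i <;> rfl⟩
    · exact ⟨⟨(crP * (cP * cP)), (mul_mem hcrm (mul_mem hcm hcm))⟩, by funext i; fin_cases i <;> rfl⟩


def selV (v : Fin 4 → ℤ) : Prop := v 0 + v 1 + v 2 + v 3 = 0

instance : DecidablePred selV := fun v => inferInstanceAs (Decidable (_ = _))

lemma coe_inter_N5 (F : Finset (Fin 4 → ℤ)) : (↑F : Set (Fin 4 → ℤ)) ∩ N5 = ↑(F.filter selV) := by
  ext v
  simp [N5, selV, Finset.mem_filter, Set.mem_setOf_eq, and_comm]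


/-- Exactly eighteen of the 42 ray generators lie in `N₅`, comprising three
`Γ₅ = ⟨c, Cr⟩`-orbits of cardinality 6 each: the orbit of `(1,0,0,−1)` (type B),
of `(1,1,−1,−1)` (type C), and of `(0,1,−1,0)` (type D). Hence the fan
`F₅ = F₆ ∩ N₅` has exactly 18 rays, six each of types B, C, D. -/
theorem rays_in_N5 :
    RaySet ∩ N5 = O5B ∪ O5C ∪ O5D ∧
    O5B.ncard = 6 ∧ O5C.ncard = 6 ∧ O5D.ncard = 6 ∧
    Disjoint O5B O5C ∧ Disjoint O5B O5D ∧ Disjoint O5C O5D ∧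
    O5B ⊆ OB ∧ O5C ⊆ OC ∧ O5D ⊆ OD ∧
    (RaySet ∩ N5).ncard = 18 := by
  have hR : RaySet = ↑(FOA ∪ FOB ∪ FOC ∪ FOD) := by
    unfold RaySet
    rw [OA_eq, OB_eq, OC_eq, OD_eq, Finset.coe_union, Finset.coe_union, Finset.coe_union]
  have h5 : O5B ∪ O5C ∪ O5D = (↑(FO5B ∪ FO5C ∪ FO5D) : Set (Fin 4 → ℤ)) := by
    rw [O5B_eq, O5C_eq, O5D_eq, Finset.coe_union, Finset.coe_union]
  refine ⟨?_, ?_, ?_, ?_, ?_, ?_, ?_, ?_, ?_, ?_, ?_⟩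
  · rw [hR, h5, coe_inter_N5]
    exact congrArg _ (by set_option maxRecDepth 100000 in decide)
  · rw [O5B_eq, Set.ncard_coe_finset]; decide
  · rw [O5C_eq, Set.ncard_coe_finset]; decide
  · rw [O5D_eq, Set.ncard_coe_finset]; decide
  · rw [O5B_eq, O5C_eq]; exact Finset.disjoint_coe.mpr (by decide)
  · rw [O5B_eq, O5D_eq]; exact Finset.disjoint_coe.mpr (by decide)
  · rw [O5C_eq, O5D_eq]; exact Finset.disjoint_coe.mpr (by decide)
  · rw [O5B_eq, OB_eq]; exact Finset.coe_subset.mpr (by decide)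
  · rw [O5C_eq, OC_eq]; exact Finset.coe_subset.mpr (by decide)
  · rw [O5D_eq, OD_eq]; exact Finset.coe_subset.mpr (by decide)
  · rw [hR, coe_inter_N5, Set.ncard_coe_finset]; decide
end

section
/- In the group Γ₆ ⊆ Sym(L), the setwise stabilizer of the single unordered triple {R₁,G₁,B₁} is exactly the subgroup ⟨c, Cr⟩; it has order 6 and is isomorphic to C₃ × C₂. Moreover, under the linear action of Γ₆ on ℤ^4, this subgroup acts faithfully on the rank-three sublattice N₅ = {(δ,ρ̄,γ̄,β̄) : δ+ρ̄+γ̄+β̄ = 0}. -/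
open Pointwise

/-- The triple `{R₁,G₁,B₁}` (the incidence point `P₁₁₁` of degree-5 Burniat
configurations). -/
def T5triple : Set (Fin 12) := {1, 5, 9}

/-! ### Auxiliary machinery -/

section Generic

variable {G : Type*} [Group G] (x y : G)

lemma aux_pow_mod_eq {k : ℕ} (h : x ^ k = 1) (n : ℕ) : x ^ (n % k) = x ^ n := by
  conv_rhs => rw [← Nat.div_add_mod n k]
  rw [pow_add, pow_mul, h, one_pow, one_mul]

lemma aux_pow_fin_add {k : ℕ} [NeZero k] (h : x ^ k = 1) (a b : Fin k) :
    x ^ (a : ℕ) * x ^ (b : ℕ) = x ^ ((a + b : Fin k) : ℕ) := by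
  rw [← pow_add, Fin.val_add, aux_pow_mod_eq x h]

lemma aux_pow_zmod_add {k : ℕ} [NeZero k] (h : x ^ k = 1) (a b : ZMod k) :
    x ^ (a + b).val = x ^ a.val * x ^ b.val := by
  rw [← pow_add, ZMod.val_add, aux_pow_mod_eq x h]

/-- The six products `x^i * y^d`. -/
def g6 : Fin 3 × Fin 2 → G := fun p => x ^ (p.1 : ℕ) * y ^ (p.2 : ℕ)

lemma g6_mul (hx : x ^ 3 = 1) (hy : y ^ 2 = 1) (hc : x * y = y * x) (p q : Fin 3 × Fin 2) :
    g6 x y p * g6 x y q = g6 x y (p.1 + q.1, p.2 + q.2) := by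
  have hcom : Commute x y := hc
  unfold g6
  rw [(hcom.symm.pow_pow (p.2 : ℕ) (q.1 : ℕ)).mul_mul_mul_comm,
    aux_pow_fin_add x hx, aux_pow_fin_add y hy]

/-- The subgroup `{x^i * y^d}` generated by commuting elements of orders dividing 3, 2. -/
def H6 (hx : x ^ 3 = 1) (hy : y ^ 2 = 1) (hc : x * y = y * x) : Subgroup G where
  carrier := Set.range (g6 x y)
  one_mem' := ⟨(0, 0), by simp [g6]⟩
  mul_mem' := by
    rintro _ _ ⟨p, rfl⟩ ⟨q, rfl⟩
    exact ⟨_, (g6_mul x y hx hy hc p q).symm⟩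
  inv_mem' := by
    rintro _ ⟨p, rfl⟩
    refine ⟨(-p.1, -p.2), (inv_eq_of_mul_eq_one_left ?_).symm⟩
    rw [g6_mul x y hx hy hc]
    simp [g6]

lemma closure_eq_H6 (hx : x ^ 3 = 1) (hy : y ^ 2 = 1) (hc : x * y = y * x) :
    Subgroup.closure {x, y} = H6 x y hx hy hc := by
  apply le_antisymm
  · rw [Subgroup.closure_le]
    rintro z (rfl | rfl)
    · exact ⟨(1, 0), by simp [g6]⟩
    · exact ⟨(0, 1), by simp [g6]⟩
  · rintro _ ⟨p, rfl⟩
    exact mul_mem (pow_mem (Subgroup.subset_closure (by simp)) _)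
      (pow_mem (Subgroup.subset_closure (by simp)) _)

lemma card_H6 (hx : x ^ 3 = 1) (hy : y ^ 2 = 1) (hc : x * y = y * x)
    (hinj : Function.Injective (g6 x y)) :
    Nat.card (H6 x y hx hy hc) = 6 := by
  have e1 : Nat.card (H6 x y hx hy hc) = Nat.card (Set.range (g6 x y)) :=
    Nat.card_congr (Equiv.subtypeEquivRight (fun g => Iff.rfl :
      ∀ g, g ∈ H6 x y hx hy hc ↔ g ∈ Set.range (g6 x y)))
  rw [e1, Nat.card_range_of_injective hinj]
  simp

noncomputable def mulEquivH6 (hx : x ^ 3 = 1) (hy : y ^ 2 = 1) (hc : x * y = y * x)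
    (hinj : Function.Injective (g6 x y)) :
    Multiplicative (ZMod 3) × Multiplicative (ZMod 2) ≃* H6 x y hx hy hc := by
  have hcom : Commute x y := hc
  let φ : Multiplicative (ZMod 3) × Multiplicative (ZMod 2) → H6 x y hx hy hc :=
    fun z => ⟨x ^ (z.1.toAdd).val * y ^ (z.2.toAdd).val,
      ⟨(⟨(z.1.toAdd).val, ZMod.val_lt _⟩, ⟨(z.2.toAdd).val, ZMod.val_lt _⟩), rfl⟩⟩
  have hmul : ∀ z w, φ (z * w) = φ z * φ w := by
    intro z w
    apply Subtype.ext
    show x ^ ((z.1.toAdd + w.1.toAdd)).val * y ^ ((z.2.toAdd + w.2.toAdd)).val = _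
    rw [aux_pow_zmod_add x hx, aux_pow_zmod_add y hy]
    exact ((hcom.symm.pow_pow _ _).mul_mul_mul_comm _ _).symm
  have hinj' : Function.Injective φ := by
    intro z w h
    have h2 : g6 x y (⟨(z.1.toAdd).val, ZMod.val_lt _⟩, ⟨(z.2.toAdd).val, ZMod.val_lt _⟩) =
        g6 x y (⟨(w.1.toAdd).val, ZMod.val_lt _⟩, ⟨(w.2.toAdd).val, ZMod.val_lt _⟩) :=
      congrArg Subtype.val h
    have h3 := hinj h2
    have h4 : (z.1.toAdd).val = (w.1.toAdd).val := congrArg (Fin.val ∘ Prod.fst) h3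
    have h5 : (z.2.toAdd).val = (w.2.toAdd).val := congrArg (Fin.val ∘ Prod.snd) h3
    ext
    · exact ZMod.val_injective 3 h4
    · exact ZMod.val_injective 2 h5
  have hsurj : Function.Surjective φ := by
    rintro ⟨g, ⟨⟨i, d⟩, rfl⟩⟩
    refine ⟨(Multiplicative.ofAdd ((i : ℕ) : ZMod 3), Multiplicative.ofAdd ((d : ℕ) : ZMod 2)), ?_⟩
    apply Subtype.ext
    show x ^ (((i : ℕ) : ZMod 3)).val * y ^ (((d : ℕ) : ZMod 2)).val = g6 x y (i, d)
    rw [ZMod.val_natCast_of_lt i.isLt, ZMod.val_natCast_of_lt d.isLt]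
    rfl
  exact MulEquiv.mk' (Equiv.ofBijective φ ⟨hinj', hsurj⟩) hmul

end Generic

/-! ### Concrete facts about the generators -/

lemma hLx : cL ^ 3 = 1 := by decide
lemma hLy : crL ^ 2 = 1 := by decide
lemma hLc : cL * crL = crL * cL := by decide
lemma hLinj : Function.Injective (g6 cL crL) := by decide

lemma hPx : cP ^ 3 = 1 := by
  ext v i
  show cP (cP (cP v)) i = v i
  fin_cases i <;> rfl

lemma hPy : crP ^ 2 = 1 := by
  ext v i
  show crP (crP v) i = v i
  simp [crP]

lemma hPc : cP * crP = crP * cP := by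
  ext v i
  show cP (crP v) i = crP (cP v) i
  fin_cases i <;> simp [cP, crP]

lemma hPinj : Function.Injective (g6 cP crP) := by
  rintro ⟨a, c⟩ ⟨b, d⟩ h
  have hv := congrFun (congrArg (fun (e : Equiv.Perm (Fin 4 → ℤ)) => e ![(-6), 1, 2, 3]) h) 1
  clear h
  fin_cases a <;> fin_cases b <;> fin_cases c <;> fin_cases d <;>
    first
      | rfl
      | (exfalso
         simp only [g6, cP, crP, pow_succ, pow_zero, one_mul, mul_one,
           Equiv.Perm.mul_apply, Equiv.Perm.one_apply, Equiv.coe_fn_mk, Equiv.neg_apply,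
           Pi.neg_apply, Matrix.cons_val_one, Matrix.cons_val_zero, Matrix.head_cons,
           Matrix.cons_val_two, Matrix.cons_val_three, Matrix.tail_cons] at hv
         omega)

/-! ### The full group `Γ₆` as an explicit set of 48 elements -/

abbrev B4 := Bool × Bool × Bool × Bool

def nB : B4 → Equiv.Perm (Fin 12) :=
  fun v => (cond v.1 srL 1) * (cond v.2.1 sgL 1) * (cond v.2.2.1 sbL 1) * (cond v.2.2.2 crL 1)

def xor4 : B4 → B4 → B4 :=
  fun v w => (xor v.1 w.1, xor v.2.1 w.2.1, xor v.2.2.1 w.2.2.1, xor v.2.2.2 w.2.2.2)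

def rotB : B4 → B4 := fun v => (v.2.1, v.2.2.1, v.1, v.2.2.2)

set_option maxRecDepth 100000 in
lemma nB_mul : ∀ v w, nB v * nB w = nB (xor4 v w) := by decide

set_option maxRecDepth 100000 in
lemma nB_conj : ∀ v, nB v * cL = cL * nB (rotB v) := by decide

lemma nB_conj_pow (j : Fin 3) (v : B4) :
    nB v * cL ^ (j : ℕ) = cL ^ (j : ℕ) * nB (rotB^[(j : ℕ)] v) := by
  fin_cases j
  · simp
  · simpa using nB_conj v
  · show nB v * cL ^ 2 = cL ^ 2 * nB (rotB^[2] v)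
    rw [sq, ← mul_assoc, nB_conj, mul_assoc, nB_conj, ← mul_assoc]
    rfl

abbrev P48 := Fin 3 × B4

def f48 : P48 → Equiv.Perm (Fin 12) := fun p => cL ^ (p.1 : ℕ) * nB p.2

def comp48 : P48 → P48 → P48 :=
  fun p q => (p.1 + q.1, xor4 (rotB^[(q.1 : ℕ)] p.2) q.2)

lemma f48_mul (p q : P48) : f48 p * f48 q = f48 (comp48 p q) := by
  show cL ^ (p.1 : ℕ) * nB p.2 * (cL ^ (q.1 : ℕ) * nB q.2) = _
  rw [mul_assoc, ← mul_assoc (nB p.2), nB_conj_pow, mul_assoc, ← mul_assoc,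
    aux_pow_fin_add cL hLx, nB_mul]
  rfl

lemma xor4_self (v : B4) : xor4 v v = (false, false, false, false) := by
  simp [xor4]

lemma f48_zero : f48 (0, (false, false, false, false)) = 1 := by
  simp [f48, nB]

def S48 : Subgroup (Equiv.Perm (Fin 12)) where
  carrier := Set.range f48
  one_mem' := ⟨(0, (false, false, false, false)), f48_zero⟩
  mul_mem' := by
    rintro _ _ ⟨p, rfl⟩ ⟨q, rfl⟩
    exact ⟨_, (f48_mul p q).symm⟩
  inv_mem' := by
    rintro _ ⟨p, rfl⟩
    refine ⟨(-p.1, rotB^[((-p.1 : Fin 3) : ℕ)] p.2), (inv_eq_of_mul_eq_one_right ?_).symm⟩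
    rw [f48_mul]
    show f48 (p.1 + -p.1, xor4 _ _) = 1
    rw [add_neg_cancel, xor4_self, f48_zero]

lemma hG6S : Γ6 ≤ S48 := by
  refine (Subgroup.closure_le _).2 ?_
  rintro z (rfl | rfl | rfl | rfl | rfl)
  · exact ⟨(1, (false, false, false, false)), by simp [f48, nB]⟩
  · exact ⟨(0, (true, false, false, false)), by simp [f48, nB]⟩
  · exact ⟨(0, (false, true, false, false)), by simp [f48, nB]⟩
  · exact ⟨(0, (false, false, true, false)), by simp [f48, nB]⟩
  · exact ⟨(0, (false, false, false, true)), by simp [f48, nB]⟩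

set_option maxRecDepth 100000 in
lemma key48 : ∀ p : P48,
    (f48 p 1 = 1 ∨ f48 p 1 = 5 ∨ f48 p 1 = 9) →
    (f48 p 5 = 1 ∨ f48 p 5 = 5 ∨ f48 p 5 = 9) →
    (f48 p 9 = 1 ∨ f48 p 9 = 5 ∨ f48 p 9 = 9) →
    p.2.1 = false ∧ p.2.2.1 = false ∧ p.2.2.2.1 = false := by decide

lemma stab_cL : cL ∈ MulAction.stabilizer (Equiv.Perm (Fin 12)) T5triple := by
  rw [MulAction.mem_stabilizer_iff]
  ext x
  rw [Set.mem_smul_set_iff_inv_smul_mem]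
  simp only [T5triple, Set.mem_insert_iff, Set.mem_singleton_iff, Equiv.Perm.smul_def]
  revert x; decide

lemma stab_crL : crL ∈ MulAction.stabilizer (Equiv.Perm (Fin 12)) T5triple := by
  rw [MulAction.mem_stabilizer_iff]
  ext x
  rw [Set.mem_smul_set_iff_inv_smul_mem]
  simp only [T5triple, Set.mem_insert_iff, Set.mem_singleton_iff, Equiv.Perm.smul_def]
  revert x; decide

/-- The setwise stabilizer in `Γ₆` of the triple `{R₁,G₁,B₁}` is exactly
`⟨c, Cr⟩`; it has order 6 and is isomorphic to `C₃ × C₂`. Moreover, under the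
linear `Γ₆`-action on `ℤ^4` this subgroup acts faithfully on the rank-three
sublattice `N₅`. -/
theorem stabilizer_deg5 :
    Γ6 ⊓ MulAction.stabilizer (Equiv.Perm (Fin 12)) T5triple =
      Subgroup.closure {cL, crL} ∧
    Nat.card (Subgroup.closure {cL, crL} : Subgroup (Equiv.Perm (Fin 12))) = 6 ∧
    Nonempty ((Subgroup.closure {cL, crL} : Subgroup (Equiv.Perm (Fin 12))) ≃*
      Multiplicative (ZMod 3) × Multiplicative (ZMod 2)) ∧
    Nat.card Γ5lin = 6 ∧
    (∀ g ∈ Γ5lin, (∀ v ∈ N5, g v = v) → g = 1) := by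
  have closureL : Subgroup.closure {cL, crL} = H6 cL crL hLx hLy hLc :=
    closure_eq_H6 cL crL hLx hLy hLc
  have closureP : Γ5lin = H6 cP crP hPx hPy hPc :=
    closure_eq_H6 cP crP hPx hPy hPc
  refine ⟨?_, ?_, ?_, ?_, ?_⟩
  · apply le_antisymm
    · rintro g hg
      rw [Subgroup.mem_inf] at hg
      obtain ⟨hg6, hst⟩ := hg
      obtain ⟨p, rfl⟩ := hG6S hg6
      rw [MulAction.mem_stabilizer_iff] at hst
      have hmem : ∀ x : Fin 12, x ∈ T5triple → f48 p x ∈ T5triple := by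
        intro x hx
        have h2 : f48 p • x ∈ f48 p • T5triple := Set.smul_mem_smul_set hx
        rwa [hst] at h2
      have h1 : f48 p 1 = 1 ∨ f48 p 1 = 5 ∨ f48 p 1 = 9 := by
        simpa [T5triple] using hmem 1 (by simp [T5triple])
      have h5 : f48 p 5 = 1 ∨ f48 p 5 = 5 ∨ f48 p 5 = 9 := by
        simpa [T5triple] using hmem 5 (by simp [T5triple])
      have h9 : f48 p 9 = 1 ∨ f48 p 9 = 5 ∨ f48 p 9 = 9 := by
        simpa [T5triple] using hmem 9 (by simp [T5triple])
      obtain ⟨ha, hb, hc2⟩ := key48 p h1 h5 h9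
      obtain ⟨i, a, b, c, d⟩ := p
      simp only at ha hb hc2
      subst ha; subst hb; subst hc2
      have hform : f48 (i, false, false, false, d) = cL ^ (i : ℕ) * (cond d crL 1) := by
        simp [f48, nB]
      rw [hform]
      have hcl : cL ∈ Subgroup.closure ({cL, crL} : Set (Equiv.Perm (Fin 12))) :=
        Subgroup.subset_closure (Set.mem_insert _ _)
      have hcr : crL ∈ Subgroup.closure ({cL, crL} : Set (Equiv.Perm (Fin 12))) :=
        Subgroup.subset_closure (Set.mem_insert_of_mem _ rfl)
      refine mul_mem (pow_mem hcl _) ?_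
      cases d
      · exact one_mem _
      · exact hcr
    · rw [le_inf_iff]
      constructor
      · refine (Subgroup.closure_le _).2 ?_
        rintro z (rfl | rfl)
        · exact Subgroup.subset_closure (Set.mem_insert _ _)
        · exact Subgroup.subset_closure (Or.inr (Or.inr (Or.inr (Or.inr rfl))))
      · refine (Subgroup.closure_le _).2 ?_
        rintro z (rfl | rfl)
        · exact stab_cL
        · exact stab_crL
  · rw [closureL]
    exact card_H6 cL crL hLx hLy hLc hLinj
  · rw [closureL]
    exact ⟨(mulEquivH6 cL crL hLx hLy hLc hLinj).symm⟩
  · rw [closureP]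
    exact card_H6 cP crP hPx hPy hPc hPinj
  · intro g hg hfix
    rw [closureP] at hg
    have hg' : g ∈ Set.range (g6 cP crP) := hg
    obtain ⟨⟨a, c⟩, rfl⟩ := hg'
    have hN : (![(-6 : ℤ), 1, 2, 3]) ∈ N5 := by
      simp only [N5, Set.mem_setOf_eq, Matrix.cons_val_zero, Matrix.cons_val_one,
        Matrix.head_cons, Matrix.cons_val_two, Matrix.cons_val_three, Matrix.tail_cons]
      norm_num
    have hv := congrFun (hfix _ hN) 1
    fin_cases a <;> fin_cases c <;>
      first
        | (exfalso
           simp only [g6, cP, crP, pow_succ, pow_zero, one_mul, mul_one,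
             Equiv.Perm.mul_apply, Equiv.Perm.one_apply, Equiv.coe_fn_mk, Equiv.neg_apply,
             Pi.neg_apply, Matrix.cons_val_one, Matrix.cons_val_zero, Matrix.head_cons,
             Matrix.cons_val_two, Matrix.cons_val_three, Matrix.tail_cons] at hv
           omega)
        | (show g6 cP crP _ = 1; simp [g6])
end
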